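/- arXiv:1706.04418 — 2 statements merged into one kernel-verified Lean document; each statement's English description precedes it below -/
import Mathlib

section
/- For every natural number n and every real number x, the spherical Bessel function satisfies |j_n(x)| ≤ |x|^n · e^{x²/2} / (2n+1)!!. -/
/-!
Since `(2n+2m+1)‼ ≥ (2n+1)‼`, the `m`-th term of the series for `j_n(x)` is bounded in absolute
value by `|x|^n / (2n+1)‼` times the `m`-th term of the exponential series of `x²/2`.
-/

open Real Nat

/-- The spherical Bessel function of order `n`, defined by its everywhere absolutely convergent
power series `j_n(x) = Σ_{m=0}^∞ (−1)^m x^{2m+n} / (2^m · m! · (2n+2m+1)!!)`. -/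
noncomputable def sphericalBesselJ (n : ℕ) (x : ℝ) : ℝ :=
  ∑' m : ℕ, (-1 : ℝ) ^ m * x ^ (2 * m + n) /
    (2 ^ m * (m.factorial : ℝ) * ((2 * n + 2 * m + 1)‼ : ℝ))

theorem Nat.doubleFactorial_le_add_two_mul (k m : ℕ) : k‼ ≤ (k + 2 * m)‼ := by
  induction m with
  | zero => rfl
  | succ m ih =>
    rw [Nat.mul_succ, ← Nat.add_assoc, doubleFactorial_add_two]
    exact ih.trans (Nat.le_mul_of_pos_left _ (Nat.succ_pos _))

theorem abs_sphericalBesselJ_term_le (n m : ℕ) (x : ℝ) :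
    |(-1 : ℝ) ^ m * x ^ (2 * m + n) / (2 ^ m * (m.factorial : ℝ) * ((2 * n + 2 * m + 1)‼ : ℝ))|
      ≤ |x| ^ n / ((2 * n + 1)‼ : ℝ) * ((x ^ 2 / 2) ^ m / m.factorial) := by
  have hdf : ((2 * n + 1)‼ : ℝ) ≤ ((2 * n + 2 * m + 1)‼ : ℝ) := by
    rw [Nat.add_right_comm]
    exact_mod_cast Nat.doubleFactorial_le_add_two_mul _ _
  calc |(-1 : ℝ) ^ m * x ^ (2 * m + n) / (2 ^ m * (m.factorial : ℝ) * ((2 * n + 2 * m + 1)‼ : ℝ))|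
      = |x| ^ (2 * m + n) / (2 ^ m * (m.factorial : ℝ) * ((2 * n + 2 * m + 1)‼ : ℝ)) := by
        simp only [abs_div, abs_mul, abs_pow, abs_neg, abs_one, one_pow, one_mul, abs_two,
          Nat.abs_cast]
    _ ≤ |x| ^ (2 * m + n) / (2 ^ m * (m.factorial : ℝ) * ((2 * n + 1)‼ : ℝ)) := by gcongr
    _ = |x| ^ n / ((2 * n + 1)‼ : ℝ) * ((x ^ 2 / 2) ^ m / m.factorial) := by
        rw [pow_add, pow_mul, sq_abs, div_pow]
        ring

/-- For every natural number `n` and every real `x`, the spherical Bessel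
function satisfies `|j_n(x)| ≤ |x|^n · e^{x²/2} / (2n+1)!!`. -/
theorem abs_sphericalBesselJ_le (n : ℕ) (x : ℝ) :
    |sphericalBesselJ n x| ≤ |x| ^ n * Real.exp (x ^ 2 / 2) / ((2 * n + 1)‼ : ℝ) := by
  have hexp : HasSum (fun m : ℕ => |x| ^ n / ((2 * n + 1)‼ : ℝ) * ((x ^ 2 / 2) ^ m / m.factorial))
      (|x| ^ n / ((2 * n + 1)‼ : ℝ) * Real.exp (x ^ 2 / 2)) := by
    simpa only [← Real.exp_eq_exp_ℝ] using
      (NormedSpace.expSeries_div_hasSum_exp (x ^ 2 / 2)).mul_left (|x| ^ n / ((2 * n + 1)‼ : ℝ))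
  rw [mul_div_right_comm, sphericalBesselJ, ← Real.norm_eq_abs]
  exact tsum_of_norm_bounded hexp fun m => abs_sphericalBesselJ_term_le n m x
end

section
/- For all k > 0, R > 0 and every ε with 0 < ε < e^{−1}, there exists N₀ ∈ ℕ (depending on ε, R, k) such that for all natural numbers n ≥ N₀ and all r ∈ (0, R], the spherical Bessel function satisfies j_n(kr) ≥ (1−ε) · e^{n+1/2} · k^n · r^n / (√2 · (2n+1)^{n+1}). -/
/-!
For `0 ≤ x` and `x² ≤ 2(2n+3)` the terms of the series of `j_n(x)` decrease in absolute value,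
so the alternating series test gives `j_n(x) ≥ x^n/(2n+1)!! · (1 - x²/(2(2n+3)))`; on a bounded
range of `x` the correction factor tends to `1` as `n → ∞`. Stirling's formula applied to
`(2n+1)!! = (2n+1)!/(2^n n!)` gives `(2n+1)!! ~ √2 (2n+1)^{n+1} e^{-(n+1/2)}`, and the two
asymptotics combine to the bound.
-/

open Real Nat

open Filter Topology Stirling

noncomputable def sphericalBesselTerm (n : ℕ) (x : ℝ) (m : ℕ) : ℝ :=
  x ^ (2 * m + n) / (2 ^ m * m ! * (2 * n + 2 * m + 1)‼)

lemma sphericalBesselJ_eq_tsum (n : ℕ) (x : ℝ) :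
    sphericalBesselJ n x = ∑' m, (-1) ^ m * sphericalBesselTerm n x m := by
  simp only [sphericalBesselJ, sphericalBesselTerm, mul_div_assoc]

lemma sphericalBesselTerm_zero (n : ℕ) (x : ℝ) :
    sphericalBesselTerm n x 0 = x ^ n / (2 * n + 1)‼ := by
  simp [sphericalBesselTerm]

lemma sphericalBesselTerm_succ (n : ℕ) (x : ℝ) (m : ℕ) :
    sphericalBesselTerm n x (m + 1) =
      sphericalBesselTerm n x m * x ^ 2 / (2 * (m + 1) * (2 * n + 2 * m + 3)) := by
  rw [sphericalBesselTerm, sphericalBesselTerm,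
    show 2 * n + 2 * (m + 1) + 1 = 2 * n + 2 * m + 1 + 2 by ring, Nat.doubleFactorial_add_two,
    Nat.factorial_succ]
  push_cast
  field_simp
  ring

lemma abs_sphericalBesselTerm_le (n : ℕ) (x : ℝ) (m : ℕ) :
    |sphericalBesselTerm n x m| ≤ |x| ^ n * ((x ^ 2 / 2) ^ m / m !) := by
  have hD : (1 : ℝ) ≤ (2 * n + 2 * m + 1)‼ := by exact_mod_cast Nat.doubleFactorial_pos _
  have hD' : (0 : ℝ) < 2 ^ m * m ! * (2 * n + 2 * m + 1)‼ := by positivity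
  rw [sphericalBesselTerm, abs_div, abs_of_pos hD', abs_pow, div_pow, pow_add,
    pow_mul, sq_abs, div_div, mul_comm (_ ^ m), mul_div_assoc]
  gcongr |x| ^ n * ?_
  exact div_le_div_of_nonneg_left (by positivity) (by positivity)
    (le_mul_of_one_le_right (by positivity) hD)

lemma summable_sphericalBesselTerm (n : ℕ) (x : ℝ) : Summable (sphericalBesselTerm n x) :=
  .of_norm_bounded ((summable_pow_div_factorial _).mul_left _) (abs_sphericalBesselTerm_le n x)

lemma antitone_sphericalBesselTerm (n : ℕ) {x : ℝ} (hx : 0 ≤ x)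
    (hx2 : x ^ 2 ≤ 2 * (2 * n + 3)) : Antitone (sphericalBesselTerm n x) := by
  refine antitone_nat_of_succ_le fun m ↦ ?_
  rw [sphericalBesselTerm_succ, div_le_iff₀ (by positivity)]
  have hx2m : x ^ 2 ≤ 2 * (m + 1) * (2 * n + 2 * m + 3) := by nlinarith [m.cast_nonneg (α := ℝ)]
  have hterm : 0 ≤ sphericalBesselTerm n x m := by unfold sphericalBesselTerm; positivity
  gcongr

lemma le_sphericalBesselJ_of_sq_le (n : ℕ) {x : ℝ} (hx : 0 ≤ x) (hx2 : x ^ 2 ≤ 2 * (2 * n + 3)) :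
    x ^ n / (2 * n + 1)‼ * (1 - x ^ 2 / (2 * (2 * n + 3))) ≤ sphericalBesselJ n x := by
  have h := (antitone_sphericalBesselTerm n hx hx2).alternating_series_le_tendsto
    (summable_sphericalBesselTerm n x).tendsto_alternating_series_tsum 1
  rw [sphericalBesselJ_eq_tsum]
  refine le_of_eq_of_le ?_ h
  simp only [mul_one, Finset.sum_range_succ, Finset.range_one, Finset.sum_singleton, pow_zero,
    pow_one, one_mul, neg_mul, sphericalBesselTerm_zero, sphericalBesselTerm_succ n x 0,
    CharP.cast_eq_zero, zero_add, mul_zero, add_zero]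
  ring

lemma eventually_le_sphericalBesselJ (X : ℝ) {δ : ℝ} (hδ : 0 < δ) :
    ∀ᶠ n : ℕ in atTop, ∀ x ∈ Set.Icc 0 X,
      (1 - δ) * (x ^ n / (2 * n + 1)‼) ≤ sphericalBesselJ n x := by
  have hsmall : Tendsto (fun n : ℕ ↦ X ^ 2 / (2 * (2 * n + 3))) atTop (𝓝 0) :=
    tendsto_const_nhds.div_atTop <|
      tendsto_atTop_mono (fun n ↦ by linarith [n.cast_nonneg (α := ℝ)]) tendsto_natCast_atTop_atTop
  filter_upwards [hsmall.eventually_lt_const (lt_min hδ one_pos)] with n hn x hx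
  have hxX : x ^ 2 / (2 * (2 * n + 3)) ≤ X ^ 2 / (2 * (2 * n + 3)) := by
    gcongr
    exacts [hx.1, hx.2]
  have hx2 : x ^ 2 ≤ 2 * (2 * n + 3) := by
    rw [← div_le_one (by positivity)]
    linarith [min_le_right δ 1]
  calc (1 - δ) * (x ^ n / (2 * n + 1)‼)
      ≤ x ^ n / (2 * n + 1)‼ * (1 - x ^ 2 / (2 * (2 * n + 3))) := by
        rw [mul_comm]
        gcongr
        · exact div_nonneg (pow_nonneg hx.1 n) (by positivity)
        · linarith [min_le_left δ 1]
    _ ≤ sphericalBesselJ n x := le_sphericalBesselJ_of_sq_le n hx.1 hx2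

lemma doubleFactorial_two_mul_add_one_eq (n : ℕ) :
    ((2 * n + 1)‼ : ℝ) = (2 * n + 1)! / (2 ^ n * n !) := by
  rw [eq_div_iff (by positivity)]
  exact_mod_cast (Nat.doubleFactorial_two_mul n ▸ Nat.factorial_eq_mul_doubleFactorial (2 * n)).symm

lemma doubleFactorial_mul_exp_div_eq_stirlingSeq (n : ℕ) (hn : n ≠ 0) :
    ((2 * n + 1)‼ : ℝ) * exp (n + 1 / 2) / (√2 * (2 * n + 1) ^ (n + 1)) =
      stirlingSeq (2 * n + 1) / stirlingSeq n * √((2 * n + 1) / (2 * n)) *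
        ((2 * n + 1) / (2 * n)) ^ n / exp (1 / 2) := by
  have hn' : (0 : ℝ) < n := by positivity
  have hexp_pos := exp_pos (1 / 2)
  have hexp : exp 1 = exp (1 / 2) ^ 2 := by rw [← exp_nat_mul]; norm_num
  have hexp' : exp (n + 1 / 2) = exp (1 / 2) ^ (2 * n + 1) := by
    rw [← exp_nat_mul]; push_cast; ring_nf
  rw [doubleFactorial_two_mul_add_one_eq, hexp']
  simp only [stirlingSeq, hexp]
  push_cast
  rw [sqrt_div (by positivity), sqrt_mul zero_le_two, sqrt_mul zero_le_two]
  simp only [div_pow, mul_pow]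
  field_simp
  ring

lemma tendsto_doubleFactorial_mul_exp_div :
    Tendsto (fun n : ℕ ↦ ((2 * n + 1)‼ : ℝ) * exp (n + 1 / 2) / (√2 * (2 * n + 1) ^ (n + 1)))
      atTop (𝓝 1) := by
  have hstirling : Tendsto (fun n : ℕ ↦ stirlingSeq (2 * n + 1) / stirlingSeq n) atTop (𝓝 1) := by
    have hπ : √π ≠ 0 := by positivity
    have h2n : Tendsto (fun n : ℕ ↦ 2 * n + 1) atTop atTop :=
      tendsto_atTop_mono (fun n ↦ show n ≤ 2 * n + 1 by omega) tendsto_id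
    rw [← div_self hπ]
    exact (tendsto_stirlingSeq_sqrt_pi.comp h2n).div tendsto_stirlingSeq_sqrt_pi hπ
  have hone : ∀ᶠ n : ℕ in atTop, 1 + 1 / 2 / (n : ℝ) = (2 * n + 1) / (2 * n) := by
    filter_upwards [eventually_ne_atTop 0] with n hn
    field_simp
  have hratio : Tendsto (fun n : ℕ ↦ (2 * n + 1 : ℝ) / (2 * n)) atTop (𝓝 1) := by
    simpa using (tendsto_const_nhds.add (tendsto_const_div_atTop_nhds_zero_nat (1 / 2))).congr' hone
  have hpow : Tendsto (fun n : ℕ ↦ ((2 * n + 1 : ℝ) / (2 * n)) ^ n) atTop (𝓝 (exp (1 / 2))) :=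
    (tendsto_one_add_div_pow_exp (1 / 2)).congr' (hone.mono fun n h ↦ by rw [h])
  have h := ((hstirling.mul hratio.sqrt).mul hpow).div_const (exp (1 / 2))
  rw [Real.sqrt_one, one_mul, one_mul, div_self (exp_pos _).ne'] at h
  refine h.congr' ?_
  filter_upwards [eventually_ne_atTop 0] with n hn
  exact (doubleFactorial_mul_exp_div_eq_stirlingSeq n hn).symm

theorem sphericalBesselJ_lower_bound_general (k R ε : ℝ) (hk : 0 < k)
    (hε : 0 < ε) :
    ∃ N₀ : ℕ, ∀ n : ℕ, N₀ ≤ n → ∀ r ∈ Set.Ioc (0 : ℝ) R,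
      (1 - ε) * Real.exp ((n : ℝ) + 1 / 2) * k ^ n * r ^ n /
          (Real.sqrt 2 * (2 * (n : ℝ) + 1) ^ (n + 1)) ≤
        sphericalBesselJ n (k * r) := by
  have hconst : ∀ᶠ n : ℕ in atTop,
      (1 - ε) * (((2 * n + 1)‼ : ℝ) * exp (n + 1 / 2) / (√2 * (2 * n + 1) ^ (n + 1))) <
        1 - ε / 2 := by
    refine (tendsto_doubleFactorial_mul_exp_div.const_mul (1 - ε)).eventually_lt_const ?_
    linarith
  obtain ⟨N₀, hN₀⟩ :=
    eventually_atTop.mp (hconst.and (eventually_le_sphericalBesselJ (k * R) (half_pos hε)))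
  refine ⟨N₀, fun n hn r hr ↦ ?_⟩
  obtain ⟨hlt, hJ⟩ := hN₀ n hn
  have hkr : k * r ∈ Set.Icc 0 (k * R) :=
    ⟨(mul_pos hk hr.1).le, mul_le_mul_of_nonneg_left hr.2 hk.le⟩
  calc (1 - ε) * exp (n + 1 / 2) * k ^ n * r ^ n / (√2 * (2 * n + 1) ^ (n + 1))
      = (1 - ε) * (((2 * n + 1)‼ : ℝ) * exp (n + 1 / 2) / (√2 * (2 * n + 1) ^ (n + 1))) *
          ((k * r) ^ n / (2 * n + 1)‼) := by
        rw [mul_pow]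
        field_simp
    _ ≤ (1 - ε / 2) * ((k * r) ^ n / (2 * n + 1)‼) := by
        gcongr
        exact div_nonneg (pow_nonneg hkr.1 n) (by positivity)
    _ ≤ sphericalBesselJ n (k * r) := hJ _ hkr

/-- For all `k > 0`, `R > 0` and every `ε` with `0 < ε < e⁻¹`, there exists
`N₀ ∈ ℕ` (depending on `ε, R, k`) such that for all natural numbers `n ≥ N₀` and all
`r ∈ (0, R]`, the spherical Bessel function satisfies
`j_n(kr) ≥ (1−ε) · e^{n+1/2} · k^n · r^n / (√2 · (2n+1)^{n+1})`. -/
theorem sphericalBesselJ_lower_bound (k R ε : ℝ) (hk : 0 < k) (hR : 0 < R)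
    (hε : 0 < ε) (hε' : ε < (Real.exp 1)⁻¹) :
    ∃ N₀ : ℕ, ∀ n : ℕ, N₀ ≤ n → ∀ r ∈ Set.Ioc (0 : ℝ) R,
      (1 - ε) * Real.exp ((n : ℝ) + 1 / 2) * k ^ n * r ^ n /
          (Real.sqrt 2 * (2 * (n : ℝ) + 1) ^ (n + 1)) ≤
        sphericalBesselJ n (k * r) :=
  sphericalBesselJ_lower_bound_general k R ε hk hε
end
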